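/- Let j ≥ 1 be an integer and let ξ, η ∈ ℝ³ be such that either (η lies in the support of χ_j^− and ξ − η lies in the support of χ_j^+) or (η lies in the support of χ_j^+ and ξ − η lies in the support of χ_j^−). Then −2 ≤ (ξ₂ − η₂)η₂³ / (|ξ − η| |η|³) + (ξ₂ − η₂)³η₂ / (|ξ − η|³ |η|) ≤ −1/256. -/

import Mathlib

open MeasureTheory ENNReal Real Filter
open scoped RealInnerProductSpace

noncomputable section

/-- Physical/frequency space ℝ³ with the Euclidean norm. -/
abbrev R3 := EuclideanSpace ℝ (Fin 3)

/-- Vector values ℂ⁶ = ℂ³ × ℂ³ (velocity and micro-rotation components). -/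
abbrev C6 := (Fin 3 ⊕ Fin 3) → ℂ

/-- η lies in the support of χ_j^+, the cube {|ξ₁| ≤ 1, |ξ₂ − 2^j| ≤ 1, |ξ₃| ≤ 1}. -/
def InSuppP (j : ℤ) (η : R3) : Prop :=
  |η 0| ≤ 1 ∧ |η 1 - 2 ^ j| ≤ 1 ∧ |η 2| ≤ 1

/-- η lies in the support of χ_j^−, the cube {|ξ₁| ≤ 1, |ξ₂ + 2^j| ≤ 1, |ξ₃| ≤ 1}. -/
def InSuppM (j : ℤ) (η : R3) : Prop :=
  |η 0| ≤ 1 ∧ |η 1 + 2 ^ j| ≤ 1 ∧ |η 2| ≤ 1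

/-!
With `s = (ξ₂ - η₂) / |ξ - η|` and `t = η₂ / |η|` the quantity is `s t³ + s³ t = s t (s² + t²)`.
On both cubes the second coordinate dominates the other two, so `s², t² ∈ [1/3, 1]`, and the
cubes lie on opposite sides of `{ξ₂ = 0}` because `2^j ≥ 2`, so `s t < 0`. Hence
`s t ∈ [-1, -1/3]`, `s² + t² ∈ [2/3, 2]` and the quantity lies in `[-2, -2/9]`.
-/

lemma mul_cube_add_cube_mul_mem_Icc {s t c : ℝ} (hc : 0 ≤ c) (hst : s * t ≤ 0)
    (hs : s ^ 2 ∈ Set.Icc c 1) (ht : t ^ 2 ∈ Set.Icc c 1) :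
    s * t ^ 3 + s ^ 3 * t ∈ Set.Icc (-2) (-(2 * c ^ 2)) := by
  obtain ⟨hs₀, hs₁⟩ := hs
  obtain ⟨ht₀, ht₁⟩ := ht
  have hprod : c ^ 2 ≤ (s * t) ^ 2 ∧ (s * t) ^ 2 ≤ 1 := by
    rw [mul_pow]
    exact ⟨by nlinarith, by nlinarith⟩
  have hlow : -1 ≤ s * t := by nlinarith
  have hhigh : s * t ≤ -c := by nlinarith
  have hfactor : s * t ^ 3 + s ^ 3 * t = s * t * (s ^ 2 + t ^ 2) := by ring
  rw [hfactor]
  exact ⟨by nlinarith, by nlinarith⟩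

namespace EuclideanSpace

variable {ι : Type*} [Fintype ι]

lemma sq_apply_div_norm_le_one (v : EuclideanSpace ℝ ι) (i : ι) : (v i / ‖v‖) ^ 2 ≤ 1 := by
  rw [div_pow]
  refine div_le_one_of_le₀ ?_ (sq_nonneg _)
  simpa using pow_le_pow_left₀ (norm_nonneg _) (v.norm_apply_le i) 2

lemma norm_sq_le_card_mul_sq_apply {v : EuclideanSpace ℝ ι} {i : ι} (h : ∀ k, |v k| ≤ |v i|) :
    ‖v‖ ^ 2 ≤ Fintype.card ι * v i ^ 2 := by
  rw [norm_sq_eq, ← nsmul_eq_mul]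
  refine Finset.sum_le_card_nsmul _ _ _ fun k _ => ?_
  rw [Real.norm_eq_abs, ← sq_abs (v i)]
  exact pow_le_pow_left₀ (abs_nonneg _) (h k) 2

lemma inv_card_le_sq_apply_div_norm {v : EuclideanSpace ℝ ι} {i : ι} (hi : v i ≠ 0)
    (h : ∀ k, |v k| ≤ |v i|) : (Fintype.card ι : ℝ)⁻¹ ≤ (v i / ‖v‖) ^ 2 := by
  have hv : 0 < ‖v‖ := norm_pos_iff.2 fun hv => hi (by simp [hv])
  have hcard : (0 : ℝ) < Fintype.card ι := by simpa using Fintype.card_pos_iff.2 ⟨i⟩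
  rw [div_pow, le_div_iff₀ (by positivity), inv_mul_le_iff₀ hcard]
  exact norm_sq_le_card_mul_sq_apply h

lemma mem_Icc_of_apply_mul_apply_neg {u w : EuclideanSpace ℝ ι} {i : ι}
    (hu : ∀ k, |u k| ≤ |u i|) (hw : ∀ k, |w k| ≤ |w i|) (huw : u i * w i < 0) :
    u i * w i ^ 3 / (‖u‖ * ‖w‖ ^ 3) + u i ^ 3 * w i / (‖u‖ ^ 3 * ‖w‖) ∈
      Set.Icc (-2) (-(2 * ((Fintype.card ι : ℝ)⁻¹) ^ 2)) := by
  have hsign : u i / ‖u‖ * (w i / ‖w‖) ≤ 0 := by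
    rw [div_mul_div_comm]
    exact div_nonpos_of_nonpos_of_nonneg huw.le (by positivity)
  have hbounds := mul_cube_add_cube_mul_mem_Icc (by positivity) hsign
    ⟨inv_card_le_sq_apply_div_norm (left_ne_zero_of_mul huw.ne) hu, sq_apply_div_norm_le_one u i⟩
    ⟨inv_card_le_sq_apply_div_norm (right_ne_zero_of_mul huw.ne) hw, sq_apply_div_norm_le_one w i⟩
  convert hbounds using 1
  ring

end EuclideanSpace

lemma abs_apply_le_abs_apply_one {v : R3} (h0 : |v 0| ≤ 1) (h1 : 1 ≤ |v 1|) (h2 : |v 2| ≤ 1)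
    (k : Fin 3) : |v k| ≤ |v 1| := by
  fin_cases k
  exacts [h0.trans h1, le_rfl, h2.trans h1]

lemma two_le_two_zpow {j : ℤ} (hj : 1 ≤ j) : (2 : ℝ) ≤ 2 ^ j := by
  simpa using zpow_le_zpow_right₀ (by norm_num : (1 : ℝ) ≤ 2) hj

section Supports

variable {j : ℤ} {v : R3}

lemma InSuppP.one_le_apply_one (hj : 1 ≤ j) (h : InSuppP j v) : 1 ≤ v 1 := by
  linarith [(abs_le.1 h.2.1).1, two_le_two_zpow hj]

lemma InSuppM.apply_one_le_neg_one (hj : 1 ≤ j) (h : InSuppM j v) : v 1 ≤ -1 := by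
  linarith [(abs_le.1 h.2.1).2, two_le_two_zpow hj]

lemma InSuppP.abs_apply_le (hj : 1 ≤ j) (h : InSuppP j v) (k : Fin 3) : |v k| ≤ |v 1| :=
  abs_apply_le_abs_apply_one h.1 ((h.one_le_apply_one hj).trans (le_abs_self _)) h.2.2 k

lemma InSuppM.abs_apply_le (hj : 1 ≤ j) (h : InSuppM j v) (k : Fin 3) : |v k| ≤ |v 1| :=
  abs_apply_le_abs_apply_one h.1
    ((le_neg_of_le_neg (h.apply_one_le_neg_one hj)).trans (neg_le_abs _)) h.2.2 k

end Supports

/-- For an integer j ≥ 1, if η ∈ supp χ_j^− and ξ − η ∈ supp χ_j^+ (or with the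
roles of + and − exchanged), then
−2 ≤ (ξ₂ − η₂)η₂³/(|ξ − η||η|³) + (ξ₂ − η₂)³η₂/(|ξ − η|³|η|) ≤ −1/256. -/
theorem interaction_sign_bound_cubic (j : ℤ) (hj : 1 ≤ j) (ξ η : R3)
    (h : (InSuppM j η ∧ InSuppP j (ξ - η)) ∨ (InSuppP j η ∧ InSuppM j (ξ - η))) :
    -2 ≤ (ξ 1 - η 1) * (η 1) ^ 3 / (‖ξ - η‖ * ‖η‖ ^ 3) +
        (ξ 1 - η 1) ^ 3 * η 1 / (‖ξ - η‖ ^ 3 * ‖η‖) ∧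
      (ξ 1 - η 1) * (η 1) ^ 3 / (‖ξ - η‖ * ‖η‖ ^ 3) +
          (ξ 1 - η 1) ^ 3 * η 1 / (‖ξ - η‖ ^ 3 * ‖η‖) ≤ -(1 / 256) := by
  obtain ⟨hu, hw, huw⟩ : (∀ k, |(ξ - η) k| ≤ |(ξ - η) 1|) ∧ (∀ k, |η k| ≤ |η 1|) ∧
      (ξ - η) 1 * η 1 < 0 := by
    rcases h with ⟨hη, hξη⟩ | ⟨hη, hξη⟩
    · exact ⟨hξη.abs_apply_le hj, hη.abs_apply_le hj, mul_neg_of_pos_of_neg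
        (by linarith [hξη.one_le_apply_one hj]) (by linarith [hη.apply_one_le_neg_one hj])⟩
    · exact ⟨hξη.abs_apply_le hj, hη.abs_apply_le hj, mul_neg_of_neg_of_pos
        (by linarith [hξη.apply_one_le_neg_one hj]) (by linarith [hη.one_le_apply_one hj])⟩
  obtain ⟨hlow, hhigh⟩ := EuclideanSpace.mem_Icc_of_apply_mul_apply_neg hu hw huw
  rw [PiLp.sub_apply] at hlow hhigh
  refine ⟨hlow, hhigh.trans ?_⟩
  norm_num
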